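/- arXiv:2309.10565 — 3 statements merged into one kernel-verified Lean document; each statement's English description precedes it below -/
import Mathlib

section
/- Let n be a natural number and let A, B be positive semidefinite n×n complex matrices. Then the product A*B is diagonalizable: there exist an invertible n×n complex matrix P and a diagonal n×n complex matrix D such that A*B = P * D * P⁻¹. -/
/-!
Write `A = S * S` with `S = √A`. Then `A * B = S * (S * B)`, while the reversed product
`K = S * B * S` is Hermitian, hence killed by a squarefree polynomial `X * r` whose roots are `0`
and the eigenvalues of `K`. Since `x * y * p (x * y) = x * p (y * x) * y`, this gives
`(A * B) ^ 2 * r (A * B) = 0`. Positivity of `A` and `B` makes `ker (A * B) ^ 2 = ker (A * B)`,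
so `X * r` kills `A * B` as well, and a complex matrix killed by a squarefree polynomial is
diagonalizable.
-/

open scoped ComplexOrder

open Polynomial

theorem Polynomial.mul_aeval_mul_comm {R A : Type*} [CommSemiring R] [Semiring A] [Algebra R A]
    (x y : A) (p : R[X]) : y * aeval (x * y) p = aeval (y * x) p * y := by
  have hconj (i : ℕ) : y * (x * y) ^ i = (y * x) ^ i * y :=
    SemiconjBy.pow_right (mul_assoc y x y).symm i
  simp only [aeval_eq_sum_range, Finset.mul_sum, Finset.sum_mul, mul_smul_comm, smul_mul_assoc,
    hconj]

theorem Polynomial.aeval_mul_X_mul {R A : Type*} [CommSemiring R] [Semiring A] [Algebra R A]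
    (x y : A) (p : R[X]) : aeval (x * y) (X * p) = x * aeval (y * x) p * y := by
  rw [map_mul, aeval_X, mul_assoc, mul_aeval_mul_comm, mul_assoc]

namespace Matrix

section Diagonalizable

variable {n K : Type*} [Fintype n] [DecidableEq n]

def IsDiagonalizable [CommRing K] (M : Matrix n n K) : Prop :=
  ∃ P D : Matrix n n K, IsUnit P ∧ D.IsDiag ∧ M = P * D * P⁻¹

variable [Field K]

theorem isDiagonalizable_of_basis_mulVec_eq_smul {M : Matrix n n K}
    (v : Module.Basis n K (n → K)) (μ : n → K) (hv : ∀ i, M *ᵥ v i = μ i • v i) :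
    M.IsDiagonalizable := by
  set e := Pi.basisFun K n
  have hD : LinearMap.toMatrix v v (toLin' M) = diagonal μ := by
    ext i j
    rw [LinearMap.toMatrix_apply, toLin'_apply, hv j, map_smul, v.repr_self, diagonal_apply]
    rcases eq_or_ne i j with rfl | h <;> simp [*]
  refine ⟨e.toMatrix v, diagonal μ, @isUnit_of_invertible _ _ _ (e.invertibleToMatrix v),
    isDiag_diagonal μ, ?_⟩
  rw [inv_eq_right_inv (e.toMatrix_mul_toMatrix_flip v), ← hD,
    basis_toMatrix_mul_linearMap_toMatrix_mul_basis_toMatrix, LinearMap.toMatrix_eq_toMatrix',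
    LinearMap.toMatrix'_toLin']

theorem isDiagonalizable_of_iSup_eigenspace_eq_top {M : Matrix n n K}
    (h : ⨆ μ, Module.End.eigenspace (toLin' M) μ = ⊤) : M.IsDiagonalizable := by
  classical
  have hInt := DirectSum.isInternal_submodule_of_iSupIndep_of_iSup_eq_top
    (Module.End.eigenspaces_iSupIndep (toLin' M)) h
  let w μ := Module.finBasis K (Module.End.eigenspace (toLin' M) μ)
  let b := hInt.collectedBasis w
  have := FiniteDimensional.fintypeBasisIndex b
  let e : _ ≃ n := Fintype.equivOfCardEq <| by
    rw [← Module.finrank_eq_card_basis b, Module.finrank_fintype_fun_eq_card]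
  refine isDiagonalizable_of_basis_mulVec_eq_smul (b.reindex e) (fun i => (e.symm i).1) fun i => ?_
  rw [Module.Basis.reindex_apply]
  exact Module.End.mem_eigenspace_iff.mp (hInt.collectedBasis_mem w (e.symm i))

theorem isDiagonalizable_of_squarefree_aeval_eq_zero [IsAlgClosed K] {M : Matrix n n K}
    {p : K[X]} (hp : Squarefree p) (hM : aeval M p = 0) : M.IsDiagonalizable := by
  have hlin : aeval (toLinAlgEquiv' M) p = 0 := by
    rw [aeval_algHom_apply, hM, map_zero]
  exact isDiagonalizable_of_iSup_eigenspace_eq_top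
    (Module.End.isSemisimple_of_squarefree_aeval_eq_zero hp hlin).iSup_eigenspace_eq_top

end Diagonalizable

section RCLike

variable {m n 𝕜 : Type*} [Fintype n] [RCLike 𝕜]

theorem IsHermitian.aeval_eq_zero_of_forall_isRoot [DecidableEq n] {A : Matrix n n 𝕜}
    (hA : A.IsHermitian) {p : 𝕜[X]} (hp : ∀ i, p.IsRoot (hA.eigenvalues i)) :
    aeval A p = 0 := by
  have hdiag : aeval (RCLike.ofReal ∘ hA.eigenvalues : n → 𝕜) p = 0 := by
    ext i
    simpa [← aeval_algHom_apply] using hp i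
  rw [hA.spectral_theorem, aeval_algHom_apply, ← diagonalAlgHom_apply 𝕜, aeval_algHom_apply,
    hdiag, map_zero, map_zero]

theorem IsHermitian.exists_squarefree_X_mul_aeval_eq_zero [DecidableEq n] {A : Matrix n n 𝕜}
    (hA : A.IsHermitian) : ∃ r : 𝕜[X], Squarefree (X * r) ∧ aeval A (X * r) = 0 := by
  set s := (Finset.univ.image fun i => (hA.eigenvalues i : 𝕜)).erase 0
  have hprod : X * ∏ μ ∈ s, (X - C μ) = ∏ μ ∈ insert 0 s, (X - C μ) := by
    rw [Finset.prod_insert (Finset.notMem_erase 0 _), C_0, sub_zero]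
  refine ⟨∏ μ ∈ s, (X - C μ), ?_, hA.aeval_eq_zero_of_forall_isRoot fun i => ?_⟩
  · rw [hprod]
    exact (separable_prod_X_sub_C_iff'.mpr fun _ _ _ _ h => h).squarefree
  · have hi : (hA.eigenvalues i : 𝕜) ∈ insert 0 s :=
      Finset.insert_erase_subset _ _ (Finset.mem_image_of_mem _ (Finset.mem_univ i))
    rw [hprod, IsRoot, eval_prod]
    exact Finset.prod_eq_zero hi (by simp)

open scoped MatrixOrder in
theorem PosSemidef.mul_eq_zero_of_conjTranspose_mul_mul_eq_zero {B : Matrix n n 𝕜}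
    (hB : B.PosSemidef) {Y : Matrix n m 𝕜} (h : Yᴴ * B * Y = 0) : B * Y = 0 := by
  classical
  obtain ⟨C, rfl⟩ := CStarAlgebra.nonneg_iff_eq_star_mul_self.mp hB.nonneg
  rw [star_eq_conjTranspose] at h ⊢
  rw [conjTranspose_mul_self_mul_eq_zero, ← conjTranspose_mul_self_eq_zero]
  simpa only [conjTranspose_mul, Matrix.mul_assoc] using h

theorem PosSemidef.mul_mul_eq_zero_of_mul_sq_mul_eq_zero [DecidableEq n] {A B : Matrix n n 𝕜}
    (hA : A.PosSemidef) (hB : B.PosSemidef) {M : Matrix n m 𝕜} (h : (A * B) ^ 2 * M = 0) :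
    A * B * M = 0 := by
  have hBY : B * (A * B * M) = 0 := by
    refine hB.mul_eq_zero_of_conjTranspose_mul_mul_eq_zero ?_
    calc (A * B * M)ᴴ * B * (A * B * M) = Mᴴ * B * ((A * B) ^ 2 * M) := by
          simp only [conjTranspose_mul, hA.1.eq, hB.1.eq, sq, Matrix.mul_assoc]
      _ = 0 := by rw [h, Matrix.mul_zero]
  have hABM : A * (B * M) = 0 := by
    refine hA.mul_eq_zero_of_conjTranspose_mul_mul_eq_zero ?_
    calc (B * M)ᴴ * A * (B * M) = Mᴴ * (B * (A * B * M)) := by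
          simp only [conjTranspose_mul, hB.1.eq, Matrix.mul_assoc]
      _ = 0 := by rw [hBY, Matrix.mul_zero]
  rwa [Matrix.mul_assoc]

end RCLike

end Matrix

open Matrix in
/-- The product of two positive semidefinite complex matrices is diagonalizable:
`A * B = P * D * P⁻¹` for some invertible `P` and diagonal `D`. -/
theorem mul_posSemidef_diagonalizable (n : ℕ) (A B : Matrix (Fin n) (Fin n) ℂ)
    (hA : A.PosSemidef) (hB : B.PosSemidef) :
    ∃ (P D : Matrix (Fin n) (Fin n) ℂ), IsUnit P ∧ D.IsDiag ∧ A * B = P * D * P⁻¹ := by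
  obtain ⟨S, hS, hSS⟩ : ∃ S : Matrix (Fin n) (Fin n) ℂ, S.PosSemidef ∧ S * S = A := by
    open scoped MatrixOrder in
    exact ⟨CFC.sqrt A, (CFC.sqrt_nonneg A).posSemidef, CFC.sqrt_mul_sqrt_self A hA.nonneg⟩
  have hK : (S * B * S).IsHermitian := by
    simpa only [hS.1.eq] using (hB.mul_mul_conjTranspose_same S).1
  obtain ⟨r, hr, hKr⟩ := hK.exists_squarefree_X_mul_aeval_eq_zero
  have hsq : (A * B) ^ 2 * aeval (A * B) r = 0 :=
    calc (A * B) ^ 2 * aeval (A * B) r = aeval (S * (S * B)) (X * (X * r)) := by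
          rw [← hSS, Matrix.mul_assoc S S B]
          simp only [map_mul, aeval_X, sq, mul_assoc]
      _ = S * aeval (S * B * S) (X * r) * (S * B) := aeval_mul_X_mul _ _ _
      _ = 0 := by rw [hKr, mul_zero, zero_mul]
  have hAB : aeval (A * B) (X * r) = 0 := by
    rw [map_mul, aeval_X]
    exact hA.mul_mul_eq_zero_of_mul_sq_mul_eq_zero hB hsq
  exact isDiagonalizable_of_squarefree_aeval_eq_zero hr hAB
end

section
/- Let n be a natural number and let A, B be positive semidefinite n×n complex matrices. Then every root z of the characteristic polynomial of A*B is a nonnegative real number, i.e., z has imaginary part 0 and real part ≥ 0. -/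
/-!
If `(A * B) v = z v` with `v ≠ 0`, then `(B v)ᴴ A (B v) = z · vᴴ B v`, and both quadratic
forms are nonnegative. So `z ≥ 0` when `vᴴ B v > 0`; when `vᴴ B v = 0`, positivity of `B`
gives `B v = 0`, hence `z v = 0` and `z = 0`.
-/

open scoped ComplexOrder

namespace Matrix

variable {K 𝕜 n : Type*} [Fintype n]

lemma exists_mulVec_eq_smul_of_mem_roots_charpoly [Field K] [DecidableEq n] {M : Matrix n n K}
    {z : K} (hz : z ∈ M.charpoly.roots) : ∃ v ≠ 0, M *ᵥ v = z • v := by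
  have hz' : Module.End.HasEigenvalue (toLin' M) z := by
    rw [Module.End.hasEigenvalue_iff_isRoot_charpoly, charpoly_toLin']
    exact Polynomial.isRoot_of_mem_roots hz
  obtain ⟨v, hv⟩ := hz'.exists_hasEigenvector
  exact ⟨v, hv.2, hv.apply_eq_smul⟩

lemma PosSemidef.nonneg_of_mul_mulVec_eq_smul [RCLike 𝕜] {A B : Matrix n n 𝕜}
    (hA : A.PosSemidef) (hB : B.PosSemidef) {z : 𝕜} {v : n → 𝕜} (hv : v ≠ 0)
    (h : (A * B) *ᵥ v = z • v) : 0 ≤ z := by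
  have hAB : A *ᵥ (B *ᵥ v) = z • v := by rw [mulVec_mulVec, h]
  set c := star v ⬝ᵥ (B *ᵥ v)
  have hd : star (B *ᵥ v) ⬝ᵥ (A *ᵥ (B *ᵥ v)) = z * c := by
    rw [hAB, star_mulVec, hB.isHermitian.eq, dotProduct_smul, ← dotProduct_mulVec, smul_eq_mul]
  rcases (hB.dotProduct_mulVec_nonneg v).eq_or_lt with hc | hc
  · have hBv : B *ᵥ v = 0 := (hB.dotProduct_mulVec_zero_iff v).mp hc.symm
    rw [hBv, mulVec_zero, eq_comm, smul_eq_zero] at hAB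
    exact (hAB.resolve_right hv).ge
  · calc 0 ≤ z * c * c⁻¹ :=
          mul_nonneg (hd ▸ hA.dotProduct_mulVec_nonneg (B *ᵥ v)) (RCLike.inv_pos_of_pos hc).le
      _ = z := mul_inv_cancel_right₀ hc.ne' z

end Matrix

/-- Every root of the characteristic polynomial of a product of two positive semidefinite
complex matrices is a nonnegative real number. -/
theorem roots_charpoly_mul_posSemidef_nonneg_real (n : ℕ) (A B : Matrix (Fin n) (Fin n) ℂ)
    (hA : A.PosSemidef) (hB : B.PosSemidef) :
    ∀ z ∈ (A * B).charpoly.roots, z.im = 0 ∧ 0 ≤ z.re := by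
  intro z hz
  obtain ⟨v, hv, hvz⟩ := Matrix.exists_mulVec_eq_smul_of_mem_roots_charpoly hz
  obtain ⟨hre, him⟩ := Complex.nonneg_iff.mp (hA.nonneg_of_mul_mulVec_eq_smul hB hv hvz)
  exact ⟨him.symm, hre⟩
end

section
/- Let n be a natural number and let ρ, σ be positive semidefinite n×n complex matrices (in particular, density matrices, i.e., with trace 1). Let √M denote the unique positive semidefinite square root of a positive semidefinite matrix M. Then the multiset of roots of the characteristic polynomial of √(√ρ · σ · √ρ) equals the image, under the map z ↦ (Real.sqrt (Re z) : ℂ), of the multiset of roots of the characteristic polynomial of ρ · σ. That is, the eigenvalues of the positive square root of √ρ σ √ρ are exactly the square roots of the eigenvalues of ρσ, with multiplicity. -/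
/-!
Since `charpoly (X * Y) = charpoly (Y * X)`, the matrix `ρ * σ = √ρ * (√ρ * σ)` has the same
characteristic polynomial as `√ρ * σ * √ρ`. The square root `U * diag (√λᵢ) * U⋆` of a positive
semidefinite matrix with eigenvalues `λᵢ` has characteristic polynomial `∏ (X - √λᵢ)`.
-/

open scoped ComplexOrder

namespace Matrix.PosSemidef

/-- The positive semidefinite square root, as defined in Mathlib of December 2024. -/
noncomputable def sqrt {n : Type*} [Fintype n] [DecidableEq n] {𝕜 : Type*} [RCLike 𝕜]
    {A : Matrix n n 𝕜} (hA : A.PosSemidef) : Matrix n n 𝕜 :=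
  hA.1.eigenvectorUnitary.1 * diagonal ((↑) ∘ (√·) ∘ hA.1.eigenvalues) *
    (star hA.1.eigenvectorUnitary : Matrix n n 𝕜)

end Matrix.PosSemidef

/-- `√ρ * σ * √ρ` is positive semidefinite whenever `ρ` and `σ` are. -/
noncomputable def sandwichPosSemidef {n : ℕ} {ρ σ : Matrix (Fin n) (Fin n) ℂ}
    (hρ : ρ.PosSemidef) (hσ : σ.PosSemidef) :
    (hρ.sqrt * σ * hρ.sqrt).PosSemidef := by
  have h := hσ.conjTranspose_mul_mul_same hρ.sqrt
  have hs : Matrix.conjTranspose hρ.sqrt = hρ.sqrt := by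
    simp [Matrix.PosSemidef.sqrt, Matrix.conjTranspose_mul, Matrix.diagonal_conjTranspose,
      Matrix.mul_assoc, Matrix.star_eq_conjTranspose, Pi.star_def, Function.comp_def]
  rwa [hs] at h

open Polynomial

namespace Matrix.PosSemidef

variable {n : Type*} [Fintype n] [DecidableEq n] {𝕜 : Type*} [RCLike 𝕜]
  {A : Matrix n n 𝕜} (hA : A.PosSemidef)

include hA

lemma charpoly_sqrt :
    hA.sqrt.charpoly = ∏ i, (X - C ((√(hA.1.eigenvalues i) : ℝ) : 𝕜)) := by
  rw [sqrt, charpoly_mul_comm, ← Matrix.mul_assoc]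
  simp [charpoly_diagonal]

lemma roots_charpoly_sqrt :
    hA.sqrt.charpoly.roots = A.charpoly.roots.map (fun z => ((√(RCLike.re z) : ℝ) : 𝕜)) := by
  rw [hA.charpoly_sqrt, roots_prod _ _ (Finset.prod_ne_zero_iff.mpr fun i _ => X_sub_C_ne_zero _),
    hA.1.roots_charpoly_eq_eigenvalues, Multiset.map_map]
  simp [Function.comp_def]

lemma sqrt_mul_self : hA.sqrt * hA.sqrt = A := by
  set U : Matrix n n 𝕜 := hA.1.eigenvectorUnitary.1
  have hUU : star U * U = 1 := Matrix.mem_unitaryGroup_iff'.mp hA.1.eigenvectorUnitary.2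
  calc hA.sqrt * hA.sqrt
      = U * diagonal ((↑) ∘ (√·) ∘ hA.1.eigenvalues) * (star U * U) *
          diagonal ((↑) ∘ (√·) ∘ hA.1.eigenvalues) * star U := by
        simp only [sqrt, U, Matrix.mul_assoc]
    _ = U * diagonal (RCLike.ofReal ∘ hA.1.eigenvalues) * star U := by
        rw [hUU, Matrix.mul_one, Matrix.mul_assoc U, diagonal_mul_diagonal]
        congr 3
        funext i
        simp [← RCLike.ofReal_mul, Real.mul_self_sqrt (hA.eigenvalues_nonneg i)]
    _ = A := (hA.1.spectral_theorem).symm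

lemma charpoly_sqrt_mul_mul_sqrt (B : Matrix n n 𝕜) :
    (hA.sqrt * B * hA.sqrt).charpoly = (A * B).charpoly := by
  rw [charpoly_mul_comm, ← Matrix.mul_assoc, hA.sqrt_mul_self]

end Matrix.PosSemidef

/-- The eigenvalues (roots of the characteristic polynomial, with multiplicity) of the positive
semidefinite square root of `√ρ * σ * √ρ` are exactly the square roots of the eigenvalues of
`ρ * σ`, for positive semidefinite `ρ`, `σ`. -/
theorem roots_sqrt_sandwich_eq_sqrt_roots_mul (n : ℕ) (ρ σ : Matrix (Fin n) (Fin n) ℂ)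
    (hρ : ρ.PosSemidef) (hσ : σ.PosSemidef) :
    (sandwichPosSemidef hρ hσ).sqrt.charpoly.roots =
      ((ρ * σ).charpoly.roots).map (fun z => (Real.sqrt z.re : ℂ)) := by
  rw [Matrix.PosSemidef.roots_charpoly_sqrt, hρ.charpoly_sqrt_mul_mul_sqrt]
  rfl
end
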